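/- Let A be a real n×n matrix, Q positive definite, R positive definite, B ∈ R^{n×m}, and let P be a positive semidefinite solution of the Riccati equation P = Q + AᵀPA − AᵀPB(R + BᵀPB)^{-1}BᵀPA. Then tr(P) ≥ n·σ_n(A)² / (1/λ_n(Q) + λ_1(B R^{-1} Bᵀ)) + tr(Q), where σ_n(A) is the smallest singular value of A, λ_n(Q) the smallest eigenvalue of Q, and λ_1(B R^{-1} Bᵀ) the largest eigenvalue of B R^{-1} Bᵀ. -/

import Mathlib

/-!
Let `M₀ = P - P B (R + BᵀPB)⁻¹ BᵀP`, so that the Riccati equation reads `P = Q + Aᵀ M₀ A`.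
In Joseph form `M₀` is a sum of congruences of `P` and `R`, hence `M₀ ⪰ 0` and
`P ⪰ Q ⪰ λ_n(Q) I ≻ 0`. Now the Woodbury identity gives `M₀ = (P⁻¹ + B R⁻¹ Bᵀ)⁻¹`, and as
`P⁻¹ ⪯ λ_n(Q)⁻¹ I` and inversion is antitone in the Loewner order,
`M₀ ⪰ (1/λ_n(Q) + λ_1(B R⁻¹ Bᵀ))⁻¹ I`. Taking traces in `P - Q = Aᵀ M₀ A` and using
`AᵀA ⪰ σ_n(A)² I` gives the bound.
-/

open Matrix Finset

/-- Smallest real eigenvalue of a real square matrix (sInf of the set of real eigenvalues). -/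
noncomputable def lamMin {n : ℕ} (M : Matrix (Fin n) (Fin n) ℝ) : ℝ :=
  sInf {x : ℝ | ∃ v : Fin n → ℝ, v ≠ 0 ∧ M *ᵥ v = x • v}

/-- Largest real eigenvalue of a real square matrix. -/
noncomputable def lamMax {n : ℕ} (M : Matrix (Fin n) (Fin n) ℝ) : ℝ :=
  sSup {x : ℝ | ∃ v : Fin n → ℝ, v ≠ 0 ∧ M *ᵥ v = x • v}

/-- Largest singular value of a real square matrix. -/
noncomputable def sigMax {n : ℕ} (M : Matrix (Fin n) (Fin n) ℝ) : ℝ :=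
  Real.sqrt (lamMax (Mᵀ * M))

/-- Smallest singular value of a real square matrix. -/
noncomputable def sigMin {n : ℕ} (M : Matrix (Fin n) (Fin n) ℝ) : ℝ :=
  Real.sqrt (lamMin (Mᵀ * M))

/-- `μ` is a (complex) eigenvalue of the real matrix `A`. -/
def IsEigC {n : ℕ} (A : Matrix (Fin n) (Fin n) ℝ) (μ : ℂ) : Prop :=
  ∃ v : Fin n → ℂ, v ≠ 0 ∧ (A.map (fun a => (a : ℂ))) *ᵥ v = μ • v

/-- All complex eigenvalues have modulus `< 1`. -/
def SchurStable {n : ℕ} (A : Matrix (Fin n) (Fin n) ℝ) : Prop :=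
  ∀ μ : ℂ, IsEigC A μ → ‖μ‖ < 1

open scoped MatrixOrder ComplexOrder

namespace Matrix

variable {ι κ : Type*} [Fintype ι] [Fintype κ]

theorem trace_mono {M N : Matrix ι ι ℝ} (h : M ≤ N) : M.trace ≤ N.trace :=
  OrderHomClass.mono (tracePositiveLinearMap ι ℝ ℝ) h

theorem card_mul_le_trace_of_smul_one_le [DecidableEq ι] {M : Matrix ι ι ℝ} {c : ℝ}
    (h : c • 1 ≤ M) : Fintype.card ι * c ≤ M.trace := by
  simpa [mul_comm] using trace_mono h

variable [DecidableEq κ]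

theorem PosDef.posSemidef_mul_inv_mul_transpose {R : Matrix κ κ ℝ} (hR : R.PosDef)
    (B : Matrix ι κ ℝ) : (B * R⁻¹ * Bᵀ).PosSemidef := by
  simpa using hR.inv.posSemidef.mul_mul_conjTranspose_same B

variable [DecidableEq ι]

theorem mem_spectrum_iff_exists_mulVec_eq_smul {K : Type*} [Field K] {M : Matrix ι ι K} {x : K} :
    x ∈ spectrum K M ↔ ∃ v : ι → K, v ≠ 0 ∧ M *ᵥ v = x • v := by
  rw [← spectrum_toLin', ← Module.End.hasEigenvalue_iff_mem_spectrum]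
  constructor
  · intro h
    obtain ⟨v, hv⟩ := h.exists_hasEigenvector
    exact ⟨v, hv.2, by simpa using hv.apply_eq_smul⟩
  · rintro ⟨v, hv, h⟩
    exact Module.End.hasEigenvalue_of_hasEigenvector
      ⟨by simpa [Module.End.mem_eigenspace_iff] using h, hv⟩

theorem inv_smul_one {K : Type*} [Field K] {c : K} (hc : c ≠ 0) :
    (c • (1 : Matrix ι ι K))⁻¹ = c⁻¹ • 1 :=
  inv_eq_left_inv (by simp [smul_smul, hc])

section LoewnerOrder

variable {𝕜 : Type*} [RCLike 𝕜]

theorem PosDef.inv_le_inv_of_le {X Y : Matrix ι ι 𝕜} (hX : X.PosDef) (hXY : X ≤ Y) :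
    Y⁻¹ ≤ X⁻¹ := by
  have hY : Y.PosDef := by simpa using hX.add_posSemidef hXY
  have hXu : IsUnit X.det := (isUnit_iff_isUnit_det _).1 hX.isUnit
  have hYu : IsUnit Y.det := (isUnit_iff_isUnit_det _).1 hY.isUnit
  have hYi : (Y⁻¹)ᴴ = Y⁻¹ := hY.inv.isHermitian
  have key : X⁻¹ - Y⁻¹ = (Y⁻¹ - X⁻¹)ᴴ * X * (Y⁻¹ - X⁻¹) + (Y⁻¹)ᴴ * (Y - X) * Y⁻¹ := by
    rw [conjTranspose_sub, hYi, hX.inv.isHermitian.eq]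
    simp only [Matrix.sub_mul, Matrix.mul_sub, Matrix.mul_assoc, mul_nonsing_inv X hXu]
    simp only [← Matrix.mul_assoc, nonsing_inv_mul X hXu, nonsing_inv_mul Y hYu, Matrix.one_mul,
      Matrix.mul_one]
    abel
  rw [le_iff, key]
  exact (hX.posSemidef.conjTranspose_mul_mul_same _).add
    ((le_iff.1 hXY).conjTranspose_mul_mul_same _)

end LoewnerOrder

theorem inv_le_smul_one_of_smul_one_le {X : Matrix ι ι ℝ} {c : ℝ} (hc : 0 < c)
    (h : c • 1 ≤ X) : X⁻¹ ≤ c⁻¹ • 1 := by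
  simpa [inv_smul_one hc.ne'] using (PosDef.one.smul hc).inv_le_inv_of_le h

theorem smul_one_le_inv_of_le_smul_one {X : Matrix ι ι ℝ} {c : ℝ} (hc : 0 < c) (hX : X.PosDef)
    (h : X ≤ c • 1) : c⁻¹ • 1 ≤ X⁻¹ := by
  simpa [inv_smul_one hc.ne'] using hX.inv_le_inv_of_le h

section Riccati

variable {α : Type*} [CommRing α]

/-- Joseph form: `S - C P B` plays the role of the input weight `R`. -/
theorem sub_mul_inv_mul_eq_joseph (P : Matrix ι ι α) (B : Matrix ι κ α) (C : Matrix κ ι α)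
    {S : Matrix κ κ α} (hS : IsUnit S.det) :
    P - P * B * S⁻¹ * C * P =
      (1 - P * B * S⁻¹ * C) * P * (1 - B * S⁻¹ * C * P) +
        P * B * S⁻¹ * (S - C * P * B) * (S⁻¹ * C * P) := by
  have h : P * B * S⁻¹ * S * (S⁻¹ * C * P) = P * B * S⁻¹ * C * P := by
    rw [Matrix.mul_assoc _ S⁻¹ S, nonsing_inv_mul S hS, Matrix.mul_one]
    simp only [Matrix.mul_assoc]
  simp only [Matrix.mul_sub, Matrix.sub_mul, h]
  simp only [Matrix.mul_one, Matrix.one_mul, Matrix.mul_assoc]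
  abel

theorem inv_add_mul_inv_mul_eq_sub {P : Matrix ι ι α} {R : Matrix κ κ α} (B : Matrix ι κ α)
    (C : Matrix κ ι α) (hP : IsUnit P) (hR : IsUnit R) (hS : IsUnit (R + C * P * B)) :
    (P⁻¹ + B * R⁻¹ * C)⁻¹ = P - P * B * (R + C * P * B)⁻¹ * C * P := by
  have hPd := (isUnit_iff_isUnit_det P).1 hP
  have hRd := (isUnit_iff_isUnit_det R).1 hR
  rw [add_mul_mul_inv_eq_sub _ _ _ _ (isUnit_nonsing_inv_iff.2 hP) (isUnit_nonsing_inv_iff.2 hR)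
    (by rwa [nonsing_inv_nonsing_inv R hRd, nonsing_inv_nonsing_inv P hPd]),
    nonsing_inv_nonsing_inv R hRd, nonsing_inv_nonsing_inv P hPd]

end Riccati

theorem PosSemidef.sub_mul_inv_mul {P : Matrix ι ι ℝ} {R : Matrix κ κ ℝ} (B : Matrix ι κ ℝ)
    (hP : P.PosSemidef) (hR : R.PosDef) :
    (P - P * B * (R + Bᵀ * P * B)⁻¹ * Bᵀ * P).PosSemidef := by
  set S := R + Bᵀ * P * B
  have hS : S.PosDef := hR.add_posSemidef (by simpa using hP.conjTranspose_mul_mul_same B)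
  have hSinv : (S⁻¹)ᵀ = S⁻¹ := by simpa using hS.inv.isHermitian.eq
  have hPt : Pᵀ = P := by simpa using hP.isHermitian.eq
  rw [sub_mul_inv_mul_eq_joseph P B Bᵀ ((isUnit_iff_isUnit_det S).1 hS.isUnit),
    add_sub_cancel_right]
  have hX : (1 - B * S⁻¹ * Bᵀ * P)ᵀ = 1 - P * B * S⁻¹ * Bᵀ := by
    simp [transpose_mul, hSinv, hPt, Matrix.mul_assoc]
  have hK : (S⁻¹ * Bᵀ * P)ᵀ = P * B * S⁻¹ := by
    simp [transpose_mul, hSinv, hPt, Matrix.mul_assoc]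
  refine .add ?_ ?_
  · have h := hP.conjTranspose_mul_mul_same (1 - B * S⁻¹ * Bᵀ * P)
    rwa [conjTranspose_eq_transpose_of_trivial, hX] at h
  · have h := hR.posSemidef.conjTranspose_mul_mul_same (S⁻¹ * Bᵀ * P)
    rwa [conjTranspose_eq_transpose_of_trivial, hK] at h

end Matrix

section Eigenvalues

variable {n : ℕ} {M : Matrix (Fin n) (Fin n) ℝ}

theorem lamMin_eq_sInf_spectrum (M : Matrix (Fin n) (Fin n) ℝ) :
    lamMin M = sInf (spectrum ℝ M) :=
  congrArg sInf (Set.ext fun _ => Matrix.mem_spectrum_iff_exists_mulVec_eq_smul.symm)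

theorem lamMax_eq_sSup_spectrum (M : Matrix (Fin n) (Fin n) ℝ) :
    lamMax M = sSup (spectrum ℝ M) :=
  congrArg sSup (Set.ext fun _ => Matrix.mem_spectrum_iff_exists_mulVec_eq_smul.symm)

theorem lamMin_smul_one_le (hM : M.IsHermitian) : lamMin M • 1 ≤ M := by
  rw [← Algebra.algebraMap_eq_smul_one, algebraMap_le_iff_le_spectrum hM.isSelfAdjoint,
    lamMin_eq_sInf_spectrum]
  exact fun _ hx => csInf_le (Matrix.finite_spectrum M).bddBelow hx

theorem le_lamMax_smul_one (hM : M.IsHermitian) : M ≤ lamMax M • 1 := by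
  rw [← Algebra.algebraMap_eq_smul_one, le_algebraMap_iff_spectrum_le hM.isSelfAdjoint,
    lamMax_eq_sSup_spectrum]
  exact fun _ hx => le_csSup (Matrix.finite_spectrum M).bddAbove hx

theorem card_mul_lamMin_le_trace_conj (A : Matrix (Fin n) (Fin n) ℝ) {c : ℝ} (hc : 0 ≤ c)
    (h : c • 1 ≤ M) : n * (c * lamMin (Aᵀ * A)) ≤ (Aᵀ * M * A).trace := by
  have hAA : lamMin (Aᵀ * A) • 1 ≤ Aᵀ * A :=
    lamMin_smul_one_le (by simpa using (Matrix.posSemidef_conjTranspose_mul_self A).isHermitian)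
  have key : (c * lamMin (Aᵀ * A)) • 1 ≤ Aᵀ * M * A :=
    calc (c * lamMin (Aᵀ * A)) • (1 : Matrix (Fin n) (Fin n) ℝ)
        = c • (lamMin (Aᵀ * A) • 1) := (smul_smul ..).symm
      _ ≤ c • (Aᵀ * A) := smul_le_smul_of_nonneg_left hAA hc
      _ = Aᵀ * (c • 1) * A := by simp
      _ ≤ Aᵀ * M * A := by
          simpa [star_eq_conjTranspose] using star_left_conjugate_le_conjugate h A
  simpa using Matrix.card_mul_le_trace_of_smul_one_le key

variable [NeZero n]

theorem lamMin_mem_spectrum (hM : M.IsHermitian) : lamMin M ∈ spectrum ℝ M := by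
  rw [lamMin_eq_sInf_spectrum]
  exact Set.Nonempty.csInf_mem ⟨_, hM.eigenvalues_mem_spectrum_real 0⟩ (Matrix.finite_spectrum M)

theorem lamMax_mem_spectrum (hM : M.IsHermitian) : lamMax M ∈ spectrum ℝ M := by
  rw [lamMax_eq_sSup_spectrum]
  exact Set.Nonempty.csSup_mem ⟨_, hM.eigenvalues_mem_spectrum_real 0⟩ (Matrix.finite_spectrum M)

theorem Matrix.PosDef.lamMin_pos (hM : M.PosDef) : 0 < lamMin M :=
  hM.isStrictlyPositive.spectrum_pos (lamMin_mem_spectrum hM.isHermitian)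

theorem Matrix.PosSemidef.lamMin_nonneg (hM : M.PosSemidef) : 0 ≤ lamMin M :=
  spectrum_nonneg_of_nonneg hM.nonneg (lamMin_mem_spectrum hM.isHermitian)

theorem Matrix.PosSemidef.lamMax_nonneg (hM : M.PosSemidef) : 0 ≤ lamMax M :=
  spectrum_nonneg_of_nonneg hM.nonneg (lamMax_mem_spectrum hM.isHermitian)

theorem sigMin_sq (A : Matrix (Fin n) (Fin n) ℝ) : sigMin A ^ 2 = lamMin (Aᵀ * A) :=
  Real.sq_sqrt (by simpa using (Matrix.posSemidef_conjTranspose_mul_self A).lamMin_nonneg)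

theorem inv_smul_one_le_sub_mul_inv_mul {m : ℕ} {P : Matrix (Fin n) (Fin n) ℝ}
    (B : Matrix (Fin n) (Fin m) ℝ) {R : Matrix (Fin m) (Fin m) ℝ} (hR : R.PosDef) {q : ℝ}
    (hq : 0 < q) (hqP : q • 1 ≤ P) :
    (1 / q + lamMax (B * R⁻¹ * Bᵀ))⁻¹ • 1 ≤ P - P * B * (R + Bᵀ * P * B)⁻¹ * Bᵀ * P := by
  have hW := hR.posSemidef_mul_inv_mul_transpose B
  have hP : P.PosDef := by simpa using (Matrix.PosDef.one.smul hq).add_posSemidef hqP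
  have hS : (R + Bᵀ * P * B).PosDef :=
    hR.add_posSemidef (by simpa using hP.posSemidef.conjTranspose_mul_mul_same B)
  rw [← Matrix.inv_add_mul_inv_mul_eq_sub B Bᵀ hP.isUnit hR.isUnit hS.isUnit]
  refine Matrix.smul_one_le_inv_of_le_smul_one
    (add_pos_of_pos_of_nonneg (one_div_pos.2 hq) hW.lamMax_nonneg) (hP.inv.add_posSemidef hW) ?_
  rw [add_smul]
  exact add_le_add (by simpa using Matrix.inv_le_smul_one_of_smul_one_le hq hqP)
    (le_lamMax_smul_one hW.isHermitian)

end Eigenvalues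

theorem stmt13 {n m : ℕ} (A P Q : Matrix (Fin n) (Fin n) ℝ)
    (B : Matrix (Fin n) (Fin m) ℝ) (R : Matrix (Fin m) (Fin m) ℝ)
    (hQ : Q.PosDef) (hR : R.PosDef) (hP : P.PosSemidef)
    (heq : P = Q + Aᵀ * P * A - Aᵀ * P * B * (R + Bᵀ * P * B)⁻¹ * Bᵀ * P * A) :
    (n : ℝ) * sigMin A ^ 2 / (1 / lamMin Q + lamMax (B * R⁻¹ * Bᵀ)) + Q.trace ≤ P.trace := by
  rcases n.eq_zero_or_pos with rfl | hn
  · simp [Matrix.trace]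
  have : NeZero n := ⟨hn.ne'⟩
  have hPQ : P - Q = Aᵀ * (P - P * B * (R + Bᵀ * P * B)⁻¹ * Bᵀ * P) * A := by
    conv_lhs => rw [heq]
    simp only [Matrix.mul_sub, Matrix.sub_mul, Matrix.mul_assoc]
    abel
  have hQP : Q ≤ P := by
    rw [Matrix.le_iff, hPQ]
    simpa using (hP.sub_mul_inv_mul B hR).conjTranspose_mul_mul_same A
  have hD : 0 < 1 / lamMin Q + lamMax (B * R⁻¹ * Bᵀ) :=
    add_pos_of_pos_of_nonneg (one_div_pos.2 hQ.lamMin_pos)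
      (hR.posSemidef_mul_inv_mul_transpose B).lamMax_nonneg
  have hM₀ := inv_smul_one_le_sub_mul_inv_mul B hR hQ.lamMin_pos
    ((lamMin_smul_one_le hQ.isHermitian).trans hQP)
  have htr := card_mul_lamMin_le_trace_conj A (inv_nonneg.2 hD.le) hM₀
  rw [← hPQ, Matrix.trace_sub] at htr
  rw [sigMin_sq, mul_div_assoc, div_eq_inv_mul]
  linarith
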